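/- For the load-flow map F: ℝ^N → ℝ^N and any two points u, w ∈ ℝ^N, the exact identity F(u) − F(w) = J((u + w)/2) (u − w) holds, where J is the Jacobian matrix of F. -/

import Mathlib

/-- Extension of a PQ-bus voltage vector `u : Fin N → ℝ` to bus indices `{0,…,N}`:
bus `k ∈ {1,…,N}` gets voltage `u (k-1)`, and bus `0` (the slack) gets `v₀`. -/
def extV (N : ℕ) (v₀ : ℝ) (u : Fin N → ℝ) : ℕ → ℝ :=
  fun k => if h : 1 ≤ k ∧ k ≤ N then u ⟨k - 1, by omega⟩ else v₀

/-- The load-flow map `F : ℝ^N → ℝ^N`, with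
`F_n(v) = (Σ_{k∈K(n)} g_{nk}) v_n² − (Σ_{k∈K(n)} g_{nk} v_k) v_n` for the PQ bus `n = i+1`. -/
def Fmap (N : ℕ) (K : ℕ → Finset ℕ) (g : ℕ → ℕ → ℝ) (v₀ : ℝ)
    (u : Fin N → ℝ) : Fin N → ℝ :=
  fun i => (∑ k ∈ K ((i : ℕ) + 1), g ((i : ℕ) + 1) k) * (u i) ^ 2
    - (∑ k ∈ K ((i : ℕ) + 1), g ((i : ℕ) + 1) k * extV N v₀ u k) * u i

/-- The Jacobian matrix `J(v)` of the load-flow map. -/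
def Jmat (N : ℕ) (K : ℕ → Finset ℕ) (g : ℕ → ℕ → ℝ) (v₀ : ℝ)
    (u : Fin N → ℝ) : Matrix (Fin N) (Fin N) ℝ :=
  Matrix.of fun i j =>
    if i = j then
      2 * (∑ k ∈ K ((i : ℕ) + 1), g ((i : ℕ) + 1) k) * u i
        - ∑ k ∈ K ((i : ℕ) + 1), g ((i : ℕ) + 1) k * extV N v₀ u k
    else if ((j : ℕ) + 1) ∈ K ((i : ℕ) + 1) then
      -(g ((i : ℕ) + 1) ((j : ℕ) + 1) * u i)
    else 0

/-!
Row `n` of `F` is a quadratic form in the voltage vector extended by the slack voltage, and for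
a quadratic form `q` the identity `q u - q w = Dq ((u + w) / 2) (u - w)` is exact. Because `u`
and `w` share the slack voltage, `u - w` extends by `0` at bus `0`, so the off-diagonal part of
`J` (which only sees the PQ buses) still accounts for the whole neighbour sum over `K(n)`.
-/

theorem extV_midpoint (N : ℕ) (v₀ : ℝ) (u w : Fin N → ℝ) (k : ℕ) :
    extV N v₀ (fun j => (u j + w j) / 2) k = (extV N v₀ u k + extV N v₀ w k) / 2 := by
  unfold extV
  split_ifs <;> ring

theorem extV_sub (N : ℕ) (v₀ : ℝ) (u w : Fin N → ℝ) (k : ℕ) :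
    extV N 0 (u - w) k = extV N v₀ u k - extV N v₀ w k := by
  unfold extV
  split_ifs <;> simp

theorem extV_zero_eq_sum (N : ℕ) (d : Fin N → ℝ) (k : ℕ) :
    extV N 0 d k = ∑ j : Fin N, if (j : ℕ) + 1 = k then d j else 0 := by
  unfold extV
  split_ifs with hk
  · rw [Finset.sum_eq_single_of_mem ⟨k - 1, by omega⟩ (Finset.mem_univ _)]
    · rw [if_pos (by simp only; omega)]
    · intro j _ hj
      exact if_neg fun h => hj (Fin.ext (by simp only; omega))
  · refine (Finset.sum_eq_zero fun j _ => if_neg ?_).symm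
    omega

theorem sum_mul_extV_zero (N : ℕ) (S : Finset ℕ) (c : ℕ → ℝ) (d : Fin N → ℝ) :
    ∑ k ∈ S, c k * extV N 0 d k = ∑ j : Fin N, if (j : ℕ) + 1 ∈ S then c (j + 1) * d j else 0 := by
  simp_rw [extV_zero_eq_sum, Finset.mul_sum, mul_ite, mul_zero]
  rw [Finset.sum_comm]
  exact Finset.sum_congr rfl fun j _ => Finset.sum_ite_eq _ _ _

theorem Jmat_mulVec_apply (N : ℕ) (K : ℕ → Finset ℕ) (g : ℕ → ℕ → ℝ) (v₀ : ℝ)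
    (v d : Fin N → ℝ) (i : Fin N) (hi : (i : ℕ) + 1 ∉ K (i + 1)) :
    (Jmat N K g v₀ v).mulVec d i =
      (2 * (∑ k ∈ K (i + 1), g (i + 1) k) * v i - ∑ k ∈ K (i + 1), g (i + 1) k * extV N v₀ v k)
          * d i
        - v i * ∑ k ∈ K (i + 1), g (i + 1) k * extV N 0 d k := by
  have hrow : ∀ j, Jmat N K g v₀ v i j * d j = (if i = j then Jmat N K g v₀ v i i * d j else 0)
      - v i * if (j : ℕ) + 1 ∈ K (i + 1) then g (i + 1) (j + 1) * d j else 0 := by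
    intro j
    rcases eq_or_ne i j with rfl | hij
    · simp [hi]
    · simp only [Jmat, Matrix.of_apply, if_neg hij]
      split_ifs <;> ring
  rw [sum_mul_extV_zero, Matrix.mulVec, dotProduct, Finset.sum_congr rfl fun j _ => hrow j,
    Finset.sum_sub_distrib, ← Finset.mul_sum, Finset.sum_ite_eq, if_pos (Finset.mem_univ _)]
  simp only [Jmat, Matrix.of_apply, if_true]

theorem load_flow_mean_value_identity_general
    (N : ℕ)
    (K : ℕ → Finset ℕ)
    (hKsub : ∀ n, n ≤ N → ∀ k ∈ K n, k ≤ N ∧ k ≠ n)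
    (g : ℕ → ℕ → ℝ)
    (v₀ : ℝ)
    (u w : Fin N → ℝ) :
    Fmap N K g v₀ u - Fmap N K g v₀ w
      = (Jmat N K g v₀ (fun i => (u i + w i) / 2)).mulVec (u - w) := by
  funext i
  have hi : (i : ℕ) + 1 ∉ K (i + 1) := fun h => (hKsub _ i.2 _ h).2 rfl
  rw [Pi.sub_apply, Jmat_mulVec_apply N K g v₀ _ _ i hi]
  simp only [Fmap, Pi.sub_apply, extV_midpoint, extV_sub N v₀, mul_sub, Finset.sum_sub_distrib,
    mul_div_assoc', mul_add, Finset.sum_add_distrib, ← Finset.sum_div]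
  ring

/-- For the load-flow map `F` and any two points `u, w ∈ ℝ^N`, the exact identity
`F(u) − F(w) = J((u + w)/2) (u − w)` holds. -/
theorem load_flow_mean_value_identity
    (N : ℕ) (hN : 1 ≤ N)
    (K : ℕ → Finset ℕ)
    (hKsub : ∀ n, n ≤ N → ∀ k ∈ K n, k ≤ N ∧ k ≠ n)
    (hKsymm : ∀ n, n ≤ N → ∀ k, k ≤ N → (k ∈ K n ↔ n ∈ K k))
    (g : ℕ → ℕ → ℝ)
    (hg : ∀ n k, k ∈ K n → 0 < g n k)
    (hgsymm : ∀ n k, g n k = g k n)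
    (v₀ : ℝ) (hv₀ : 0 < v₀)
    (u w : Fin N → ℝ) :
    Fmap N K g v₀ u - Fmap N K g v₀ w
      = (Jmat N K g v₀ (fun i => (u i + w i) / 2)).mulVec (u - w) :=
  load_flow_mean_value_identity_general N K hKsub g v₀ u w
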